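/- Suppose the pointwise inequality A((-f*)'(s) I(s)) ≤ (d/ds) ∫_{{|f| > f*(s)}} A(|∇f|) dγₙ holds a.e. for a convex increasing function A with A(0)=0. Then after integration, ∫₀¹ A((-f*)'(s) I(s)) ds ≤ ∫_{ℝⁿ} A(|∇f|) dγₙ, and the left-hand side equals ∫_{ℝⁿ} A(|∇f°|) dγₙ, where f° is the Gaussian symmetrization of f. -/

import Mathlib

/-!
For `u > 0` the superlevel sets `{|f| > f*(u)}` grow with `u`, so
`G(u) = ∫_{|f| > f*(u)} A(|∇f|) dγₙ` is monotone on `(0,1]` with values in `[0, ∫ A(|∇f|) dγₙ]`;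
the integral of the derivative of a monotone function is at most its increment, which gives the
inequality after integrating the pointwise hypothesis.

For the identity, `f°` depends only on `x₁`, so `|∇f°(x)| = |g'(x₁)|` with `g = f* ∘ Φ`, and the
first coordinate of `γₙ` is distributed as `γ₁`. The substitution `s = Φ(t)`, `ds = φ(t) dt`, maps
`γ₁` to Lebesgue measure on `(0,1)`; since `I(Φ(t)) = φ(t)` and `g'(t) = (f*)'(Φ(t)) φ(t)` (also
where either side fails to be differentiable, both derivatives then being `0`), it turns
`∫₀¹ A((-f*)'(s) I(s)) ds` into `∫ A(-g') dγ₁`, and `-g' = |g'|` because `g` is antitone.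
-/

open MeasureTheory Real

/-- The standard one-dimensional Gaussian density `φ(x) = (2π)^{-1/2} e^{-x²/2}`. -/
noncomputable def gaussPdf (x : ℝ) : ℝ := (2 * Real.pi) ^ (-(1:ℝ)/2) * Real.exp (-x^2 / 2)

/-- The standard Gaussian cumulative distribution function `Φ(r) = ∫_{-∞}^r φ(t) dt`. -/
noncomputable def gaussCdf (r : ℝ) : ℝ := ∫ t in Set.Iic r, gaussPdf t

/-- The inverse of `Φ`. -/
noncomputable def gaussCdfInv : ℝ → ℝ := Function.invFun gaussCdf

/-- The Gaussian isoperimetric function `I(t) = φ(Φ⁻¹(t))` on `(0,1)`, with `I(0)=I(1)=0`. -/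
noncomputable def Igauss (t : ℝ) : ℝ :=
  if t = 0 ∨ t = 1 then 0 else gaussPdf (gaussCdfInv t)

open scoped ENNReal

/-- The standard Gaussian measure `γₙ` on `ℝⁿ`. -/
noncomputable def gaussMeasure (n : ℕ) : Measure (Fin n → ℝ) :=
  Measure.pi fun _ => ProbabilityTheory.gaussianReal 0 1

/-- The Gaussian distribution function `λ_f(t) = γₙ({|f| > t})`. -/
noncomputable def distFun (n : ℕ) (f : (Fin n → ℝ) → ℝ) (t : ℝ) : ℝ :=
  (gaussMeasure n {x | t < |f x|}).toReal

/-- The decreasing rearrangement of `f` with respect to `γₙ`: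
`f*(s) = inf {t ≥ 0 : λ_f(t) ≤ s}`. -/
noncomputable def rearr (n : ℕ) (f : (Fin n → ℝ) → ℝ) (s : ℝ) : ℝ :=
  sInf {t : ℝ | 0 ≤ t ∧ distFun n f t ≤ s}

/-- The maximal function of the rearrangement, `f**(t) = (1/t) ∫₀ᵗ f*(s) ds`. -/
noncomputable def rearr2 (n : ℕ) (f : (Fin n → ℝ) → ℝ) (t : ℝ) : ℝ :=
  (1/t) * ∫ s in (0:ℝ)..t, rearr n f s

/-- The modulus of the gradient, `|∇f|(x) = ‖Df(x)‖`. -/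
noncomputable def gradNorm (n : ℕ) (f : (Fin n → ℝ) → ℝ) (x : Fin n → ℝ) : ℝ :=
  ‖fderiv ℝ f x‖

/-- The Gaussian symmetrization `f°(x) = f*(Φ(x₁))`. -/
noncomputable def gaussSymm (n : ℕ) [NeZero n] (f : (Fin n → ℝ) → ℝ)
    (x : Fin n → ℝ) : ℝ :=
  rearr n f (gaussCdf (x 0))

/-- A Young's function: convex, increasing on `[0,∞)`, vanishing at `0`. -/
def YoungFunction (A : ℝ → ℝ) : Prop :=
  ConvexOn ℝ (Set.Ici 0) A ∧ MonotoneOn A (Set.Ici 0) ∧ A 0 = 0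

open Set Filter Topology ProbabilityTheory

section GaussCdf

lemma gaussPdf_eq_gaussianPDFReal : gaussPdf = gaussianPDFReal 0 1 := by
  funext x
  rw [gaussPdf, gaussianPDFReal, NNReal.coe_one, mul_one, sub_zero, Real.sqrt_eq_rpow,
    ← Real.rpow_neg (by positivity)]
  norm_num

lemma gaussPdf_pos (x : ℝ) : 0 < gaussPdf x := by
  unfold gaussPdf; positivity

lemma continuous_gaussPdf : Continuous gaussPdf := by
  unfold gaussPdf; fun_prop

lemma integrable_gaussPdf : Integrable gaussPdf := by
  rw [gaussPdf_eq_gaussianPDFReal]; exact integrable_gaussianPDFReal 0 1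

lemma gaussCdf_eq_cdf : gaussCdf = cdf (gaussianReal 0 1) := by
  funext r
  rw [cdf_eq_real, measureReal_def, gaussianReal_apply_eq_integral 0 one_ne_zero,
    ENNReal.toReal_ofReal
      (setIntegral_nonneg measurableSet_Iic fun x _ ↦ gaussianPDFReal_nonneg _ _ x),
    ← gaussPdf_eq_gaussianPDFReal, gaussCdf]

lemma hasDerivAt_gaussCdf (r : ℝ) : HasDerivAt gaussCdf (gaussPdf r) r := by
  have hFTC := (continuous_gaussPdf.integral_hasStrictDerivAt 0 r).hasDerivAt.const_add (gaussCdf 0)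
  refine hFTC.congr_of_eventuallyEq (Eventually.of_forall fun u ↦ ?_)
  dsimp only
  rw [← intervalIntegral.integral_Iic_sub_Iic integrable_gaussPdf.integrableOn
    integrable_gaussPdf.integrableOn, gaussCdf, gaussCdf]
  ring

lemma strictMono_gaussCdf : StrictMono gaussCdf :=
  strictMono_of_hasDerivAt_pos hasDerivAt_gaussCdf gaussPdf_pos

lemma continuous_gaussCdf : Continuous gaussCdf :=
  continuous_iff_continuousAt.2 fun r ↦ (hasDerivAt_gaussCdf r).continuousAt

lemma gaussCdf_mem_Ioo (r : ℝ) : gaussCdf r ∈ Ioo (0 : ℝ) 1 := by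
  have h0 : 0 ≤ gaussCdf (r - 1) := gaussCdf_eq_cdf ▸ cdf_nonneg _ _
  have h1 : gaussCdf (r + 1) ≤ 1 := gaussCdf_eq_cdf ▸ cdf_le_one _ _
  exact ⟨h0.trans_lt (strictMono_gaussCdf (by linarith)),
    (strictMono_gaussCdf (by linarith)).trans_le h1⟩

lemma range_gaussCdf : range gaussCdf = Ioo (0 : ℝ) 1 := by
  refine (range_subset_iff.2 gaussCdf_mem_Ioo).antisymm fun s hs ↦ ?_
  have h_atBot : Tendsto gaussCdf atBot (𝓝 0) := gaussCdf_eq_cdf ▸ tendsto_cdf_atBot _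
  have h_atTop : Tendsto gaussCdf atTop (𝓝 1) := gaussCdf_eq_cdf ▸ tendsto_cdf_atTop _
  exact mem_range_of_exists_le_of_exists_ge continuous_gaussCdf
    ((h_atBot.eventually_le_const hs.1).exists) ((h_atTop.eventually_const_le hs.2).exists)

lemma gaussCdfInv_gaussCdf (r : ℝ) : gaussCdfInv (gaussCdf r) = r :=
  Function.leftInverse_invFun strictMono_gaussCdf.injective r

lemma gaussCdf_gaussCdfInv {s : ℝ} (hs : s ∈ Ioo (0 : ℝ) 1) : gaussCdf (gaussCdfInv s) = s :=
  Function.invFun_eq (by rwa [← mem_range, range_gaussCdf])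

lemma Igauss_gaussCdf (r : ℝ) : Igauss (gaussCdf r) = gaussPdf r := by
  have h := gaussCdf_mem_Ioo r
  rw [Igauss, if_neg (by rintro (h0 | h1) <;> simp_all), gaussCdfInv_gaussCdf]

lemma hasDerivAt_gaussCdfInv {s : ℝ} (hs : s ∈ Ioo (0 : ℝ) 1) :
    HasDerivAt gaussCdfInv (gaussPdf (gaussCdfInv s))⁻¹ s := by
  have hmono : MonotoneOn gaussCdfInv (Ioo 0 1) := fun a ha b hb hab ↦ by
    rw [← strictMono_gaussCdf.le_iff_le, gaussCdf_gaussCdfInv ha, gaussCdf_gaussCdfInv hb]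
    exact hab
  have himage : gaussCdfInv '' Ioo 0 1 = univ :=
    eq_univ_of_forall fun r ↦ ⟨_, gaussCdf_mem_Ioo r, gaussCdfInv_gaussCdf r⟩
  have hcont : ContinuousAt gaussCdfInv s := continuousAt_of_monotoneOn_of_image_mem_nhds hmono
    (isOpen_Ioo.mem_nhds hs) (himage ▸ univ_mem)
  refine HasDerivAt.of_local_left_inverse hcont (hasDerivAt_gaussCdf _) (gaussPdf_pos _).ne' ?_
  filter_upwards [isOpen_Ioo.mem_nhds hs] with y hy using gaussCdf_gaussCdfInv hy

lemma deriv_comp_gaussCdf (h : ℝ → ℝ) (r : ℝ) :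
    deriv (h ∘ gaussCdf) r = deriv h (gaussCdf r) * gaussPdf r := by
  by_cases hh : DifferentiableAt ℝ h (gaussCdf r)
  · exact hh.hasDerivAt.comp r (hasDerivAt_gaussCdf r) |>.deriv
  -- `h = (h ∘ Φ) ∘ Φ⁻¹` near `Φ r`, so `h ∘ Φ` cannot be differentiable at `r` either.
  have hcomp : ¬ DifferentiableAt ℝ (h ∘ gaussCdf) r := by
    intro hd
    refine hh (DifferentiableAt.congr_of_eventuallyEq (f := (h ∘ gaussCdf) ∘ gaussCdfInv) ?_ ?_)
    · rw [← gaussCdfInv_gaussCdf r] at hd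
      exact hd.comp _ (hasDerivAt_gaussCdfInv (gaussCdf_mem_Ioo r)).differentiableAt
    · filter_upwards [isOpen_Ioo.mem_nhds (gaussCdf_mem_Ioo r)] with y hy
      simp [gaussCdf_gaussCdfInv hy]
  rw [deriv_zero_of_not_differentiableAt hh, deriv_zero_of_not_differentiableAt hcomp, zero_mul]

lemma integral_comp_gaussCdf (F : ℝ → ℝ) :
    ∫ r, F (gaussCdf r) ∂gaussianReal 0 1 = ∫ s in Ioo (0 : ℝ) 1, F s := by
  rw [integral_gaussianReal_eq_integral_smul one_ne_zero, ← range_gaussCdf, ← image_univ,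
    integral_image_eq_integral_abs_deriv_smul MeasurableSet.univ
      (fun r _ ↦ (hasDerivAt_gaussCdf r).hasDerivWithinAt) strictMono_gaussCdf.injective.injOn,
    setIntegral_univ, gaussPdf_eq_gaussianPDFReal]
  simp_rw [abs_of_nonneg (gaussianPDFReal_nonneg _ _ _)]

end GaussCdf

section PiGradient

variable {ι : Type*} [Fintype ι]

lemma norm_proj_eq_one (i : ι) :
    ‖ContinuousLinearMap.proj (R := ℝ) (φ := fun _ : ι ↦ ℝ) i‖ = 1 := by
  classical
  refine le_antisymm (ContinuousLinearMap.opNorm_le_bound _ zero_le_one fun x ↦ ?_) ?_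
  · simpa using norm_le_pi_norm x i
  · simpa [Pi.norm_single] using
      (ContinuousLinearMap.proj (R := ℝ) (φ := fun _ : ι ↦ ℝ) i).le_opNorm (Pi.single i 1)

lemma norm_fderiv_comp_apply (h : ℝ → ℝ) (x : ι → ℝ) (i : ι) :
    ‖fderiv ℝ (fun y : ι → ℝ ↦ h (y i)) x‖ = |deriv h (x i)| := by
  classical
  by_cases hh : DifferentiableAt ℝ h (x i)
  · have hF : HasFDerivAt (fun y : ι → ℝ ↦ h (y i))
        (deriv h (x i) • ContinuousLinearMap.proj (R := ℝ) (φ := fun _ : ι ↦ ℝ) i) x :=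
      hh.hasDerivAt.comp_hasFDerivAt x (hasFDerivAt_apply i x)
    rw [hF.fderiv, norm_smul, norm_proj_eq_one, mul_one, Real.norm_eq_abs]
  -- `h` factors through `y ↦ h (y i)` along the line `t ↦ update x i t`.
  have hF : ¬ DifferentiableAt ℝ (fun y : ι → ℝ ↦ h (y i)) x := fun hd ↦ by
    rw [← Function.update_eq_self i x] at hd
    have hline := hd.comp (x i) (hasFDerivAt_update x (x i)).differentiableAt
    exact hh (by simpa [Function.comp_def] using hline)
  rw [fderiv_zero_of_not_differentiableAt hF, deriv_zero_of_not_differentiableAt hh, norm_zero,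
    abs_zero]

end PiGradient

lemma MonotoneOn.integral_Ioo_deriv_le {G : ℝ → ℝ} {a b m : ℝ} (hab : a < b)
    (hG : MonotoneOn G (Ioc a b)) (hm : ∀ x ∈ Ioc a b, m ≤ G x) :
    IntegrableOn (deriv G) (Ioo a b) ∧ ∫ x in Ioo a b, deriv G x ≤ G b - m := by
  -- Redefining `G a := m` makes `G` monotone on the closed interval without changing `G'` inside.
  set G' := Function.update G a m
  have hG'_of_ne {x : ℝ} (hx : x ≠ a) : G' x = G x := Function.update_of_ne hx m G
  have hG'_a : G' a = m := Function.update_self a m G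
  have hmono : MonotoneOn G' (uIcc a b) := by
    rw [uIcc_of_le hab.le]
    intro x hx y hy hxy
    rcases eq_or_ne x a with rfl | hxa
    · rcases eq_or_ne y x with rfl | hyx
      · exact le_rfl
      · rw [hG'_of_ne hyx, hG'_a]
        exact hm y ⟨lt_of_le_of_ne hxy hyx.symm, hy.2⟩
    · have hx' : x ∈ Ioc a b := ⟨lt_of_le_of_ne hx.1 hxa.symm, hx.2⟩
      rw [hG'_of_ne hxa, hG'_of_ne (hx'.1.trans_le hxy).ne']
      exact hG hx' ⟨hx'.1.trans_le hxy, hy.2⟩ hxy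
  have hderiv : EqOn (deriv G') (deriv G) (Ioo a b) := fun x hx ↦ by
    refine Filter.EventuallyEq.deriv_eq ?_
    filter_upwards [Ioi_mem_nhds hx.1] with y hy using hG'_of_ne hy.ne'
  have hint : IntegrableOn (deriv G') (Ioc a b) :=
    (intervalIntegrable_iff_integrableOn_Ioc_of_le hab.le).1 hmono.intervalIntegrable_deriv
  refine ⟨(hint.mono_set Ioo_subset_Ioc_self).congr_fun hderiv measurableSet_Ioo, ?_⟩
  have hbound := hmono.intervalIntegral_deriv_mem_uIcc
  rw [hG'_of_ne hab.ne', hG'_a, uIcc_of_le (sub_nonneg.2 (hm b ⟨hab, le_rfl⟩)),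
    intervalIntegral.integral_of_le hab.le, integral_Ioc_eq_integral_Ioo,
    setIntegral_congr_fun measurableSet_Ioo hderiv] at hbound
  exact hbound.2

lemma MonotoneOn.measurable_comp_of_nonneg {α : Type*} [MeasurableSpace α] {A : ℝ → ℝ}
    (hA : MonotoneOn A (Ici 0)) {h : α → ℝ} (hh : Measurable h) (h0 : ∀ a, 0 ≤ h a) :
    Measurable fun a ↦ A (h a) := by
  have hmono : Monotone fun u ↦ A (max u 0) := fun u v huv ↦
    hA (le_max_right u 0) (le_max_right v 0) (max_le_max huv le_rfl)
  have hcomp : (fun a ↦ A (h a)) = (fun u ↦ A (max u 0)) ∘ h :=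
    funext fun a ↦ by simp [max_eq_left (h0 a)]
  exact hcomp ▸ hmono.measurable.comp hh

lemma YoungFunction.nonneg {A : ℝ → ℝ} (hA : YoungFunction A) {x : ℝ} (hx : 0 ≤ x) : 0 ≤ A x :=
  hA.2.2 ▸ hA.2.1 (mem_Ici.2 le_rfl) (mem_Ici.2 hx) hx

section Rearrangement

variable {n : ℕ} {f : (Fin n → ℝ) → ℝ}

instance isProbabilityMeasure_gaussMeasure : IsProbabilityMeasure (gaussMeasure n) := by
  unfold gaussMeasure; infer_instance

lemma integrable_comp_gradNorm {A : ℝ → ℝ} (hA : MonotoneOn A (Ici 0)) {K : NNReal}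
    (hK : LipschitzWith K f) (μ : Measure (Fin n → ℝ)) [IsFiniteMeasure μ] :
    Integrable (fun x ↦ A (gradNorm n f x)) μ := by
  refine .of_bound (hA.measurable_comp_of_nonneg (measurable_fderiv ℝ f).norm
    fun x ↦ norm_nonneg _).aestronglyMeasurable (max |A 0| |A K|) (ae_of_all _ fun x ↦ ?_)
  have hgrad : gradNorm n f x ≤ K := norm_fderiv_le_of_lipschitz ℝ hK
  exact abs_le_max_abs_abs (hA (mem_Ici.2 le_rfl) (norm_nonneg _) (norm_nonneg _))
    (hA (norm_nonneg _) K.coe_nonneg hgrad)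

lemma tendsto_distFun_atTop (hf : Measurable f) : Tendsto (distFun n f) atTop (𝓝 0) := by
  have hsets := tendsto_measure_iInter_atTop (μ := gaussMeasure n)
    (s := fun t : ℝ ↦ {x | t < |f x|})
    (fun t ↦ (measurableSet_lt measurable_const hf.abs).nullMeasurableSet)
    (fun t t' htt' x hx ↦ htt'.trans_lt hx) ⟨0, measure_ne_top _ _⟩
  have hempty : ⋂ t : ℝ, {x | t < |f x|} = ∅ :=
    eq_empty_of_forall_notMem fun x hx ↦ lt_irrefl |f x| (mem_iInter.1 hx |f x|)
  rw [hempty, measure_empty] at hsets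
  have hreal := (ENNReal.tendsto_toReal ENNReal.zero_ne_top).comp hsets
  rw [ENNReal.toReal_zero] at hreal
  exact hreal

lemma rearr_antitoneOn (hf : Measurable f) : AntitoneOn (rearr n f) (Ioi 0) := by
  intro s hs s' _ hss'
  obtain ⟨t, ht0, hts⟩ :=
    ((tendsto_distFun_atTop hf).eventually_le_const hs).and (eventually_ge_atTop 0) |>.exists
  exact csInf_le_csInf ⟨0, fun _ ht ↦ ht.1⟩ ⟨t, hts, ht0⟩ fun t ht ↦ ⟨ht.1, ht.2.trans hss'⟩

lemma monotoneOn_setIntegral_rearr_lt (hf : Measurable f) {F : (Fin n → ℝ) → ℝ}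
    (hF : Integrable F (gaussMeasure n)) (hF0 : 0 ≤ F) :
    MonotoneOn (fun u ↦ ∫ x in {y | rearr n f u < |f y|}, F x ∂gaussMeasure n) (Ioi 0) :=
  fun _ hu _ hu' huu' ↦ setIntegral_mono_set hF.integrableOn (ae_of_all _ hF0)
    (Eventually.of_forall fun _ hy ↦ (rearr_antitoneOn hf hu hu' huu').trans_lt hy)

lemma deriv_neg_rearr_mul_Igauss_gaussCdf (hf : Measurable f) (r : ℝ) :
    deriv (fun u ↦ -rearr n f u) (gaussCdf r) * Igauss (gaussCdf r) =
      |deriv (rearr n f ∘ gaussCdf) r| := by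
  have hanti : Antitone (rearr n f ∘ gaussCdf) := fun a b hab ↦
    rearr_antitoneOn hf (gaussCdf_mem_Ioo a).1 (gaussCdf_mem_Ioo b).1
      (strictMono_gaussCdf.monotone hab)
  rw [deriv.fun_neg, Igauss_gaussCdf, neg_mul, ← deriv_comp_gaussCdf,
    abs_of_nonpos hanti.deriv_nonpos]

lemma gradNorm_gaussSymm [NeZero n] (x : Fin n → ℝ) :
    gradNorm n (gaussSymm n f) x = |deriv (rearr n f ∘ gaussCdf) (x 0)| := by
  unfold gradNorm gaussSymm
  exact norm_fderiv_comp_apply (rearr n f ∘ gaussCdf) x 0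

end Rearrangement

/-- Integrating the pointwise Talenti-type inequality for a Young's function `A` gives
`∫₀¹ A((-f*)'(s) I(s)) ds ≤ ∫ A(|∇f|) dγₙ`, and the left-hand side equals
`∫ A(|∇f°|) dγₙ` for the Gaussian symmetrization `f°`. -/
theorem young_integrated_polya_szego (n : ℕ) [NeZero n]
    (f : (Fin n → ℝ) → ℝ) (hf : ∃ K, LipschitzWith K f)
    (A : ℝ → ℝ) (hA : YoungFunction A)
    (hpt : ∀ᵐ s ∂(volume.restrict (Set.Ioo (0:ℝ) 1)),
      A (deriv (fun u => - rearr n f u) s * Igauss s) ≤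
        deriv (fun u => ∫ x in {y | rearr n f u < |f y|},
          A (gradNorm n f x) ∂gaussMeasure n) s) :
    (∫ s in Set.Ioo (0:ℝ) 1, A (deriv (fun u => - rearr n f u) s * Igauss s)) ≤
      (∫ x, A (gradNorm n f x) ∂gaussMeasure n) ∧
    (∫ s in Set.Ioo (0:ℝ) 1, A (deriv (fun u => - rearr n f u) s * Igauss s)) =
      ∫ x, A (gradNorm n (gaussSymm n f) x) ∂gaussMeasure n := by
  obtain ⟨K, hK⟩ := hf
  have hfm : Measurable f := hK.continuous.measurable
  have hF := integrable_comp_gradNorm hA.2.1 hK (gaussMeasure n)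
  have hF0 : 0 ≤ fun x ↦ A (gradNorm n f x) := fun x ↦ hA.nonneg (norm_nonneg _)
  have hLHS0 : ∀ s ∈ Ioo (0 : ℝ) 1, 0 ≤ A (deriv (fun u ↦ -rearr n f u) s * Igauss s) :=
    fun s hs ↦ by
      rw [← gaussCdf_gaussCdfInv hs, deriv_neg_rearr_mul_Igauss_gaussCdf hfm]
      exact hA.nonneg (abs_nonneg _)
  obtain ⟨hGint, hGle⟩ := (monotoneOn_setIntegral_rearr_lt hfm hF hF0).mono Ioc_subset_Ioi_self
    |>.integral_Ioo_deriv_le zero_lt_one fun u _ ↦ integral_nonneg hF0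
  refine ⟨?_, ?_⟩
  · refine (integral_mono_of_nonneg ?_ hGint hpt).trans (hGle.trans ?_)
    · filter_upwards [ae_restrict_mem measurableSet_Ioo] with s hs using hLHS0 s hs
    · exact (sub_zero _).le.trans (setIntegral_le_integral hF (ae_of_all _ hF0))
  · have hmeas := hA.2.1.measurable_comp_of_nonneg
      (measurable_deriv (rearr n f ∘ gaussCdf)).abs fun _ ↦ abs_nonneg _
    simp_rw [gradNorm_gaussSymm]
    rw [gaussMeasure, integral_comp_eval (X := fun _ : Fin n ↦ ℝ) hmeas.aestronglyMeasurable,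
      ← integral_comp_gaussCdf]
    simp_rw [deriv_neg_rearr_mul_Igauss_gaussCdf hfm]
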